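/- arXiv:1207.1597 — 2 statements merged into one kernel-verified Lean document; each statement's English description precedes it below -/
import Mathlib

section
/- Every finite subgroup Q of Houghton's group H_n has finite support: the set S_Q = {s ∈ S : q·s ≠ s for some q ∈ Q} is finite. -/
/-- `h` is eventually the translation given by the integer vector `m`:
for each ray `x`, `h (i, x) = (i + m x, x)` for all `i ≥ z x`. -/
def EvTransW (n : ℕ) (h : ℕ × Fin n → ℕ × Fin n) (m : Fin n → ℤ) : Prop :=
  ∃ z : Fin n → ℕ, ∀ (x : Fin n) (i : ℕ), z x ≤ i →
    ((h (i, x)).1 : ℤ) = (i : ℤ) + m x ∧ (h (i, x)).2 = x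

/-- `h` is eventually a translation. -/
def EvTrans (n : ℕ) (h : ℕ × Fin n → ℕ × Fin n) : Prop :=
  ∃ m : Fin n → ℤ, EvTransW n h m

/-!
An element of a finite group has finite order `k`. If it is eventually the translation by `m`,
its `k`-th power is eventually the translation by `k • m`; but that power is the identity, so
`m = 0`. An element that is eventually the identity moves only finitely many points, and the
support of `Q` is the union of the supports of its finitely many elements.
-/

namespace EvTransW

variable {n : ℕ} {h g : ℕ × Fin n → ℕ × Fin n} {m m' : Fin n → ℤ}

theorem id_zero : EvTransW n id 0 :=
  ⟨0, fun _ _ _ => ⟨by simp, rfl⟩⟩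

theorem comp (hh : EvTransW n h m) (hg : EvTransW n g m') : EvTransW n (h ∘ g) (m + m') := by
  obtain ⟨zh, hzh⟩ := hh
  obtain ⟨zg, hzg⟩ := hg
  -- past this threshold, `g` lands past the threshold of `h` on the same ray
  refine ⟨fun x => zg x + zh x + (m' x).natAbs, fun x i (hi : zg x + zh x + _ ≤ i) => ?_⟩
  obtain ⟨hg1, hg2⟩ := hzg x i (by omega)
  obtain ⟨hh1, hh2⟩ := hzh x (g (i, x)).1 (by omega)
  have hgi : g (i, x) = ((g (i, x)).1, x) := Prod.ext rfl hg2
  rw [Function.comp_apply, hgi]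
  exact ⟨by rw [hh1, hg1, Pi.add_apply]; ring, hh2⟩

theorem iterate (hh : EvTransW n h m) (k : ℕ) : EvTransW n h^[k] (k • m) := by
  induction k with
  | zero => simpa using id_zero
  | succ k ih =>
    rw [Function.iterate_succ', succ_nsmul']
    exact hh.comp ih

theorem unique (hm : EvTransW n h m) (hm' : EvTransW n h m') : m = m' := by
  obtain ⟨z, hz⟩ := hm
  obtain ⟨z', hz'⟩ := hm'
  funext x
  have h1 := (hz x (max (z x) (z' x)) (le_max_left _ _)).1
  have h2 := (hz' x (max (z x) (z' x)) (le_max_right _ _)).1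
  omega

theorem eq_zero_of_iterate_eq_id (hm : EvTransW n h m) {k : ℕ} (hk : h^[k] = id) (hk0 : 0 < k) :
    m = 0 := by
  have hkm : k • m = 0 := by
    have hkm := hm.iterate k
    rw [hk] at hkm
    exact hkm.unique id_zero
  exact (smul_eq_zero.mp hkm).resolve_left hk0.ne'

theorem finite_setOf_apply_ne (hh : EvTransW n h 0) : {s | h s ≠ s}.Finite := by
  obtain ⟨z, hz⟩ := hh
  refine ((Set.finite_Iio (Finset.univ.sup z)).prod Set.finite_univ).subset ?_
  rintro ⟨i, x⟩ hs
  refine ⟨?_, trivial⟩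
  by_contra hi
  obtain ⟨h1, h2⟩ := hz x i ((Finset.le_sup (Finset.mem_univ x)).trans (not_lt.mp hi))
  exact hs (Prod.ext (by simpa using h1) h2)

end EvTransW

/-- Every finite subgroup of Houghton's group has finite support. -/
theorem stmt_7 (n : ℕ) (Q : Subgroup (Equiv.Perm (ℕ × Fin n)))
    (hQ : ∀ q ∈ Q, EvTrans n ⇑q) (hfin : Finite Q) :
    {s : ℕ × Fin n | ∃ q ∈ Q, q s ≠ s}.Finite := by
  have hsupp : {s : ℕ × Fin n | ∃ q ∈ Q, q s ≠ s} =
      ⋃ q : Q, {s | (q : Equiv.Perm (ℕ × Fin n)) s ≠ s} := by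
    ext s
    simp
  rw [hsupp]
  refine Set.finite_iUnion fun q => ?_
  obtain ⟨m, hm⟩ := hQ q q.2
  have hpow : (⇑(q : Equiv.Perm (ℕ × Fin n)))^[orderOf q] = id := by
    rw [← Equiv.Perm.coe_pow, ← Subgroup.coe_pow, pow_orderOf_eq_one]
    rfl
  rw [hm.eq_zero_of_iterate_eq_id hpow (orderOf_pos q)] at hm
  exact hm.finite_setOf_apply_ne
end

section
/- Two finite-order elements of Houghton's group H_n are conjugate in H_n if and only if they have the same cycle type (the same number of m-cycles for each m ≥ 2). -/
/-- The set of cycles of length `m` of a permutation `q`: the orbits of the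
cyclic group generated by `q` having exactly `m` elements. -/
def cycleSet {S : Type*} (q : Equiv.Perm S) (m : ℕ) : Set (Set S) :=
  {O : Set S | (∃ s ∈ O, O = {t : S | ∃ k : ℤ, (q ^ k) s = t}) ∧ Nat.card O = m}

/-!
A finite-order element `q` of `H_n` is eventually the identity: its translation vector `a`
satisfies `k • a = 0`, the translation vector of `q ^ k = 1`. Hence `q` is supported in a finite
box `S = {0, …, N - 1} × Fin n`. Conjugation carries orbits to orbits of the same size, which gives
one direction. Conversely, two such permutations with the same numbers of `m`-cycles restrict to
permutations of `S` with the same cycle type, so they are conjugate in `Perm S`, and the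
conjugator, extended by the identity outside `S`, lies in `H_n`.
-/

open Equiv Equiv.Perm Finset

theorem evTransW_id (n : ℕ) : EvTransW n id 0 :=
  ⟨0, fun _ _ _ => by simp⟩

namespace EvTransW

variable {n : ℕ}

theorem comp_s14 {f g : ℕ × Fin n → ℕ × Fin n} {a b : Fin n → ℤ}
    (hf : EvTransW n f a) (hg : EvTransW n g b) : EvTransW n (f ∘ g) (a + b) := by
  obtain ⟨zf, hzf⟩ := hf
  obtain ⟨zg, hzg⟩ := hg
  refine ⟨fun x => zg x + zf x + (b x).natAbs, fun x i hi => ?_⟩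
  dsimp only at hi
  obtain ⟨hg₁, hg₂⟩ := hzg x i (by omega)
  obtain ⟨hf₁, hf₂⟩ := hzf x (g (i, x)).1 (by omega)
  have hgi : g (i, x) = ((g (i, x)).1, x) := Prod.ext rfl hg₂
  rw [Function.comp_apply, hgi]
  exact ⟨by rw [hf₁, hg₁, Pi.add_apply]; ring, hf₂⟩

theorem pow {q : Perm (ℕ × Fin n)} {a : Fin n → ℤ} (hq : EvTransW n q a) :
    ∀ j : ℕ, EvTransW n ⇑(q ^ j) (j • a)
  | 0 => by simpa using evTransW_id n
  | j + 1 => by rw [pow_succ, coe_mul, succ_nsmul]; exact (hq.pow j).comp_s14 hq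

theorem unique_s14 {f : ℕ × Fin n → ℕ × Fin n} {a b : Fin n → ℤ}
    (ha : EvTransW n f a) (hb : EvTransW n f b) : a = b := by
  obtain ⟨za, hza⟩ := ha
  obtain ⟨zb, hzb⟩ := hb
  funext x
  have h₁ := (hza x (max (za x) (zb x)) (le_max_left _ _)).1
  have h₂ := (hzb x (max (za x) (zb x)) (le_max_right _ _)).1
  linarith

end EvTransW

theorem evTransW_zero_iff {n : ℕ} {h : ℕ × Fin n → ℕ × Fin n} :
    EvTransW n h 0 ↔ ∃ N, ∀ s : ℕ × Fin n, N ≤ s.1 → h s = s := by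
  constructor
  · rintro ⟨z, hz⟩
    refine ⟨univ.sup z, fun ⟨i, x⟩ hi => ?_⟩
    obtain ⟨h₁, h₂⟩ := hz x i ((le_sup (mem_univ x)).trans hi)
    exact Prod.ext (by simpa using h₁) h₂
  · rintro ⟨N, hN⟩
    exact ⟨fun _ => N, fun x i hi => by simp [hN (i, x) hi]⟩

theorem EvTrans.evTransW_zero_of_isOfFinOrder {n : ℕ} {q : Perm (ℕ × Fin n)}
    (hq : EvTrans n q) (ho : IsOfFinOrder q) : EvTransW n q 0 := by
  obtain ⟨a, ha⟩ := hq
  obtain ⟨k, hk, hqk⟩ := ho.exists_pow_eq_one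
  have hka : k • a = 0 := (ha.pow k).unique_s14 (by rw [hqk]; exact evTransW_id n)
  rwa [(smul_eq_zero.mp hka).resolve_left hk.ne'] at ha

section cycleSet

variable {α : Type*} {m : ℕ}

theorem mem_cycleSet_iff {q : Perm α} {O : Set α} :
    O ∈ cycleSet q m ↔ (∃ s, O = {t | q.SameCycle s t}) ∧ Nat.card O = m :=
  and_congr_left' ⟨fun ⟨s, _, hs⟩ => ⟨s, hs⟩, fun ⟨s, hs⟩ => ⟨s, hs ▸ SameCycle.refl q s, hs⟩⟩

theorem card_sameCycle_of_apply_eq {q : Perm α} {s : α} (hs : q s = s) :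
    Nat.card {t | q.SameCycle s t} = 1 := by
  have : {t | q.SameCycle s t} = {s} :=
    Set.ext fun t => ⟨fun h => (h.eq_of_left hs).symm, fun h => h ▸ SameCycle.refl q s⟩
  rw [this, Nat.card_unique]

theorem image_mem_cycleSet_conj (h : Perm α) {q : Perm α} {O : Set α} (hO : O ∈ cycleSet q m) :
    h '' O ∈ cycleSet (h * q * h⁻¹) m := by
  obtain ⟨⟨s, rfl⟩, hcard⟩ := mem_cycleSet_iff.1 hO
  refine mem_cycleSet_iff.2 ⟨⟨h s, ?_⟩, by rwa [Nat.card_image_of_injective h.injective]⟩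
  ext t
  simp [sameCycle_conj, Equiv.image_eq_preimage_symm]

theorem cycleSet_conj (h q : Perm α) (m : ℕ) :
    cycleSet (h * q * h⁻¹) m = Set.image h '' cycleSet q m := by
  refine subset_antisymm (fun O hO => ⟨⇑h⁻¹ '' O, ?_, ?_⟩)
    (Set.image_subset_iff.2 fun O hO => image_mem_cycleSet_conj h hO)
  · simpa [mul_assoc] using image_mem_cycleSet_conj h⁻¹ hO
  · simp [Set.image_image]

theorem card_cycleSet_conj (h q : Perm α) (m : ℕ) :
    Nat.card (cycleSet (h * q * h⁻¹) m) = Nat.card (cycleSet q m) := by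
  rw [cycleSet_conj, Nat.card_image_of_injective (Set.image_injective.2 h.injective)]

theorem image_val_sameCycle_subtypePerm {p : α → Prop} {q : Perm α} (hp : ∀ x, p (q x) ↔ p x)
    (a : Subtype p) :
    Subtype.val '' {b | (q.subtypePerm hp).SameCycle a b} = {t | q.SameCycle a t} := by
  ext t
  constructor
  · rintro ⟨b, hb, rfl⟩
    exact sameCycle_subtypePerm.1 hb
  · rintro ⟨k, rfl⟩
    exact ⟨(q.subtypePerm hp ^ k) a, ⟨k, rfl⟩, by simp [subtypePerm_zpow]⟩

theorem cycleSet_eq_image_subtypePerm {p : α → Prop} {q : Perm α} (hp : ∀ x, p (q x) ↔ p x)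
    (hfix : ∀ x, ¬ p x → q x = x) (hm : 2 ≤ m) :
    cycleSet q m = Set.image Subtype.val '' cycleSet (q.subtypePerm hp) m := by
  refine subset_antisymm (fun O hO => ?_) (Set.image_subset_iff.2 fun O hO => ?_)
  · obtain ⟨⟨s, rfl⟩, hcard⟩ := mem_cycleSet_iff.1 hO
    have hs : p s := by
      by_contra hs
      have := card_sameCycle_of_apply_eq (hfix s hs)
      omega
    refine ⟨{b | (q.subtypePerm hp).SameCycle ⟨s, hs⟩ b}, mem_cycleSet_iff.2 ⟨⟨_, rfl⟩, ?_⟩,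
      image_val_sameCycle_subtypePerm hp ⟨s, hs⟩⟩
    rwa [← Nat.card_image_of_injective Subtype.val_injective,
      image_val_sameCycle_subtypePerm hp ⟨s, hs⟩]
  · obtain ⟨⟨a, rfl⟩, hcard⟩ := mem_cycleSet_iff.1 hO
    refine mem_cycleSet_iff.2 ⟨⟨a, image_val_sameCycle_subtypePerm hp a⟩, ?_⟩
    rwa [Nat.card_image_of_injective Subtype.val_injective]

theorem card_cycleSet_subtypePerm {p : α → Prop} {q : Perm α} (hp : ∀ x, p (q x) ↔ p x)
    (hfix : ∀ x, ¬ p x → q x = x) (hm : 2 ≤ m) :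
    Nat.card (cycleSet (q.subtypePerm hp) m) = Nat.card (cycleSet q m) := by
  rw [cycleSet_eq_image_subtypePerm hp hfix hm,
    Nat.card_image_of_injective (Set.image_injective.2 Subtype.val_injective)]

section Fintype

variable [Fintype α] [DecidableEq α]

theorem coe_support_eq_sameCycle {σ c : Perm α} (hc : c ∈ σ.cycleFactorsFinset) {a : α}
    (ha : a ∈ c.support) : (c.support : Set α) = {t | σ.SameCycle a t} := by
  rw [cycle_is_cycleOf ha hc]
  ext t
  rw [Finset.mem_coe, mem_support_cycleOf_iff]
  exact and_iff_left (mem_cycleFactorsFinset_support_le hc ha)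

theorem cycleSet_eq_image_support (σ : Perm α) (hm : 2 ≤ m) :
    cycleSet σ m = (fun c : Perm α => (c.support : Set α)) ''
      {c | c ∈ σ.cycleFactorsFinset ∧ #c.support = m} := by
  refine subset_antisymm (fun O hO => ?_) (Set.image_subset_iff.2 fun c hc => ?_)
  · obtain ⟨⟨s, rfl⟩, hcard⟩ := mem_cycleSet_iff.1 hO
    have hs : s ∈ σ.support := by
      by_contra hs
      have := card_sameCycle_of_apply_eq (notMem_support.1 hs)
      omega
    have hc := cycleOf_mem_cycleFactorsFinset_iff.2 hs
    have hsupp := coe_support_eq_sameCycle hc (mem_support_cycleOf_iff.2 ⟨SameCycle.refl σ s, hs⟩)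
    refine ⟨σ.cycleOf s, ⟨hc, ?_⟩, hsupp⟩
    rw [← hcard, ← hsupp, Nat.card_coe_set_eq, Set.ncard_coe_finset]
  · obtain ⟨a, ha⟩ := (mem_cycleFactorsFinset_iff.1 hc.1).1.nonempty_support
    refine mem_cycleSet_iff.2 ⟨⟨a, coe_support_eq_sameCycle hc.1 ha⟩, ?_⟩
    rw [Nat.card_coe_set_eq, Set.ncard_coe_finset, hc.2]

theorem card_cycleSet_eq_count_cycleType (σ : Perm α) (hm : 2 ≤ m) :
    Nat.card (cycleSet σ m) = σ.cycleType.count m := by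
  have hinj : Set.InjOn (fun c : Perm α => (c.support : Set α)) σ.cycleFactorsFinset := by
    intro c hc c' hc' hcc'
    have hsupp : c.support = c'.support := Finset.coe_injective hcc'
    obtain ⟨a, ha⟩ := (mem_cycleFactorsFinset_iff.1 hc).1.nonempty_support
    rw [cycle_is_cycleOf ha hc, cycle_is_cycleOf (hsupp ▸ ha) hc']
  rw [cycleSet_eq_image_support σ hm, Nat.card_coe_set_eq,
    (hinj.mono fun c hc => hc.1).ncard_image, cycleType_def, Multiset.count_map,
    ← Finset.coe_filter, Set.ncard_coe_finset, Finset.card_def, Finset.filter_val]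
  simp only [Function.comp_apply, eq_comm]

end Fintype

end cycleSet

theorem Equiv.Perm.apply_mem_iff_of_forall_notMem {α : Type*} {q : Perm α} {s : Set α}
    (hfix : ∀ x ∉ s, q x = x) (x : α) : q x ∈ s ↔ x ∈ s := by
  by_cases hx : x ∈ s
  · refine iff_of_true (by_contra fun hqx => hqx ?_) hx
    rwa [q.injective (hfix _ hqx)]
  · rw [hfix x hx]

theorem exists_conj_of_card_cycleSet_eq {α : Type*} [DecidableEq α] (S : Finset α)
    {q₁ q₂ : Perm α} (h₁ : ∀ x ∉ S, q₁ x = x) (h₂ : ∀ x ∉ S, q₂ x = x)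
    (hcard : ∀ m, 2 ≤ m → Nat.card (cycleSet q₁ m) = Nat.card (cycleSet q₂ m)) :
    ∃ h : Perm α, (∀ x ∉ S, h x = x) ∧ h * q₁ * h⁻¹ = q₂ := by
  have hS₁ := apply_mem_iff_of_forall_notMem (s := (S : Set α)) h₁
  have hS₂ := apply_mem_iff_of_forall_notMem (s := (S : Set α)) h₂
  have hcycleType : (q₁.subtypePerm hS₁).cycleType = (q₂.subtypePerm hS₂).cycleType := by
    ext m
    by_cases hm : 2 ≤ m
    · rw [← card_cycleSet_eq_count_cycleType _ hm, ← card_cycleSet_eq_count_cycleType _ hm,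
        card_cycleSet_subtypePerm hS₁ h₁ hm, card_cycleSet_subtypePerm hS₂ h₂ hm, hcard m hm]
    · rw [Multiset.count_eq_zero.2 (hm ∘ two_le_of_mem_cycleType),
        Multiset.count_eq_zero.2 (hm ∘ two_le_of_mem_cycleType)]
  obtain ⟨π, hπ⟩ := isConj_iff.1 (isConj_iff_cycleType_eq.2 hcycleType)
  refine ⟨ofSubtype π, fun x hx => ofSubtype_apply_of_not_mem π hx, ?_⟩
  rw [← ofSubtype_subtypePerm hS₁ fun x hx => by_contra fun h => hx (h₁ x h),
    ← ofSubtype_subtypePerm hS₂ fun x hx => by_contra fun h => hx (h₂ x h),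
    ← map_inv, ← map_mul, ← map_mul, hπ]

/-- Two finite-order elements of Houghton's group are conjugate in `H_n` if and
only if they have the same cycle type (the same number of `m`-cycles for each
`m ≥ 2`). -/
theorem stmt_14 (n : ℕ) (q₁ q₂ : Equiv.Perm (ℕ × Fin n))
    (hq₁ : EvTrans n ⇑q₁) (hq₂ : EvTrans n ⇑q₂)
    (ho₁ : IsOfFinOrder q₁) (ho₂ : IsOfFinOrder q₂) :
    (∃ h : Equiv.Perm (ℕ × Fin n), EvTrans n ⇑h ∧ h * q₁ * h⁻¹ = q₂) ↔
      ∀ m : ℕ, 2 ≤ m → Nat.card (cycleSet q₁ m) = Nat.card (cycleSet q₂ m) := by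
  refine ⟨fun ⟨h, _, hconj⟩ m _ => hconj ▸ (card_cycleSet_conj h q₁ m).symm, fun hcard => ?_⟩
  obtain ⟨N₁, hN₁⟩ := evTransW_zero_iff.1 (hq₁.evTransW_zero_of_isOfFinOrder ho₁)
  obtain ⟨N₂, hN₂⟩ := evTransW_zero_iff.1 (hq₂.evTransW_zero_of_isOfFinOrder ho₂)
  set N := max N₁ N₂
  have hS : ∀ s ∉ range N ×ˢ (univ : Finset (Fin n)), N ≤ s.1 := by simp
  obtain ⟨h, hfix, hconj⟩ := exists_conj_of_card_cycleSet_eq (range N ×ˢ univ)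
    (fun s hs => hN₁ s ((le_max_left _ _).trans (hS s hs)))
    (fun s hs => hN₂ s ((le_max_right _ _).trans (hS s hs))) hcard
  exact ⟨h, ⟨0, evTransW_zero_iff.2 ⟨N, fun s hs => hfix s (by simpa using hs)⟩⟩, hconj⟩
end
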